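/- arXiv:1604.05489 — 3 statements merged into one kernel-verified Lean document; each statement's English description precedes it below -/
import Mathlib

section
/- For every β > 0, the ratio K(2n)/K(n) converges to 1 as n → ∞, where K(n) = (√(R(n)) + √(R(n)−4))²/4 with R(n) = (L1(n+1,1/n)+L3(n+1,1/n))² / (L1(n+1,1/n)·L3(n+1,1/n) − L2(n+1,1/n)²) is the condition number of the Fisher information matrix corresponding to the equidistant design ξ_n = {0, 1/n, 2/n, …, 1} on [0,1]. -/
open Real Filter

/-- Entry `L1` of the Fisher information matrix for an equidistant design with
`n` points and step size `d`, covariance parameter `β`. -/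
noncomputable def L1 (β : ℝ) (n : ℕ) (d : ℝ) : ℝ :=
  (2 - (n : ℝ) + n * exp (β * d)) / (exp (β * d) + 1)

/-- Entry `L2` of the Fisher information matrix. -/
noncomputable def L2 (β : ℝ) (n : ℕ) (d : ℝ) : ℝ :=
  d * ((n : ℝ) - 1) / 2 * L1 β n d

/-- Entry `L3` of the Fisher information matrix. -/
noncomputable def L3 (β : ℝ) (n : ℕ) (d : ℝ) : ℝ :=
  d ^ 2 * ((n : ℝ) - 1) / (exp (2 * β * d) - 1) *
    ((n : ℝ) * (2 * n - 1) * (exp (β * d) - 1) ^ 2 / 6 + n * (exp (β * d) - 1) + 1)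
/-- The quantity `R(n) = (L1+L3)²/(L1·L3 − L2²)` for the equidistant design
`ξ_n = {0, 1/n, …, 1}` on `[0,1]` (`n+1` points with step `1/n`). -/
noncomputable def Rn (β : ℝ) (n : ℕ) : ℝ :=
  (L1 β (n + 1) (1 / n) + L3 β (n + 1) (1 / n)) ^ 2 /
    (L1 β (n + 1) (1 / n) * L3 β (n + 1) (1 / n) - L2 β (n + 1) (1 / n) ^ 2)

/-- The condition number `K(n) = (√R(n) + √(R(n)−4))²/4` of the Fisher
information matrix for the design `ξ_n`. -/
noncomputable def Kn (β : ℝ) (n : ℕ) : ℝ :=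
  (Real.sqrt (Rn β n) + Real.sqrt (Rn β n - 4)) ^ 2 / 4

/-!
With `t = 1/n` and `u = n (e^{β/n} - 1)`, the entries of the Fisher information matrix of `ξ_n`
are rational functions of `(t, u)`:
`L1 = (2 + (1 + t) u) / (2 + t u)`, `L2 = L1 / 2`,
`L3 = ((1 + t)(2 + t) u² / 6 + (1 + t) u + 1) / (u (2 + t u))`.
Since `(t, u) → (0, β)`, the entries, hence `R(n)` and `K(n)`, converge; the limit of `K(n)` is
positive, so `K(2n) / K(n) → 1`.
-/

open Topology

theorem tendsto_comp_div_self {α 𝕜 : Type*} [NormedField 𝕜] {l : Filter α} {u : α → 𝕜} {a : 𝕜}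
    {φ : α → α} (hu : Tendsto u l (𝓝 a)) (ha : a ≠ 0) (hφ : Tendsto φ l l) :
    Tendsto (fun x => u (φ x) / u x) l (𝓝 1) :=
  div_self ha ▸ (hu.comp hφ).div hu ha

theorem HasDerivAt.tendsto_nat_mul_sub {f : ℝ → ℝ} {f' : ℝ} (hf : HasDerivAt f f' 0) :
    Tendsto (fun n : ℕ => n * (f (n : ℝ)⁻¹ - f 0)) atTop (𝓝 f') := by
  have hinv : Tendsto (fun n : ℕ => (n : ℝ)⁻¹) atTop (𝓝[>] 0) :=
    tendsto_inv_atTop_nhdsGT_zero.comp tendsto_natCast_atTop_atTop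
  simpa [Function.comp_def] using hf.tendsto_slope_zero_right.comp hinv

theorem tendsto_nat_mul_exp_div_sub_one (c : ℝ) :
    Tendsto (fun n : ℕ => n * (exp (c / n) - 1)) atTop (𝓝 c) := by
  have h : HasDerivAt (fun t => exp (c * t)) c 0 := by
    simpa using ((hasDerivAt_id 0).const_mul c).exp
  simpa [div_eq_mul_inv] using h.tendsto_nat_mul_sub

theorem tendsto_inv_nat_prod_nat_mul_exp_div_sub_one (β : ℝ) :
    Tendsto (fun n : ℕ => ((n : ℝ)⁻¹, (n : ℝ) * (exp (β / n) - 1))) atTop (𝓝 (0, β)) :=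
  (tendsto_inv_atTop_zero.comp tendsto_natCast_atTop_atTop).prodMk_nhds
    (tendsto_nat_mul_exp_div_sub_one β)

theorem tendsto_L1_design (β : ℝ) :
    Tendsto (fun n : ℕ => L1 β (n + 1) (1 / n)) atTop (𝓝 ((2 + β) / 2)) := by
  have hF : ContinuousAt (fun p : ℝ × ℝ => (2 + (1 + p.1) * p.2) / (2 + p.1 * p.2)) (0, β) := by
    fun_prop (disch := norm_num)
  convert (hF.tendsto.comp (tendsto_inv_nat_prod_nat_mul_exp_div_sub_one β)).congr' ?_ using 2
  · norm_num
  filter_upwards [eventually_ne_atTop 0] with n hn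
  have hn' : (n : ℝ) ≠ 0 := by exact_mod_cast hn
  have he : exp (β / n) + 1 ≠ 0 := by positivity
  simp only [L1, mul_one_div, Function.comp_apply]
  generalize exp (β / n) = e at he ⊢
  push_cast
  rw [inv_mul_cancel_left₀ hn', show 2 + (e - 1) = e + 1 by ring]
  field_simp
  ring

theorem L2_design_eq_half (β : ℝ) {n : ℕ} (hn : n ≠ 0) :
    L2 β (n + 1) (1 / n) = L1 β (n + 1) (1 / n) / 2 := by
  simp only [L2]
  push_cast
  field_simp
  ring

theorem tendsto_L3_design {β : ℝ} (hβ : β ≠ 0) :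
    Tendsto (fun n : ℕ => L3 β (n + 1) (1 / n)) atTop (𝓝 ((β ^ 2 / 3 + β + 1) / (2 * β))) := by
  have hF : ContinuousAt (fun p : ℝ × ℝ =>
      ((1 + p.1) * (2 + p.1) * p.2 ^ 2 / 6 + (1 + p.1) * p.2 + 1) / (p.2 * (2 + p.1 * p.2)))
      (0, β) := by
    fun_prop (disch := simp [hβ])
  convert (hF.tendsto.comp (tendsto_inv_nat_prod_nat_mul_exp_div_sub_one β)).congr' ?_ using 2
  · ring
  filter_upwards [eventually_ne_atTop 0] with n hn
  have hn' : (n : ℝ) ≠ 0 := by exact_mod_cast hn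
  have he₁ : exp (β / n) - 1 ≠ 0 := sub_ne_zero.2 (by simpa using div_ne_zero hβ hn')
  have he₂ : 1 + exp (β / n) ≠ 0 := by positivity
  have hsq : exp (2 * β / n) - 1 = (exp (β / n) - 1) * (1 + exp (β / n)) := by
    rw [mul_div_assoc, two_mul, exp_add]; ring
  simp only [L3, mul_one_div, hsq, Function.comp_apply]
  generalize exp (β / n) = e at he₁ he₂ ⊢
  push_cast
  rw [inv_mul_cancel_left₀ hn', show 2 + (e - 1) = 1 + e by ring]
  field_simp
  ring

theorem exists_pos_tendsto_Rn {β : ℝ} (hβ : 0 < β) : ∃ R > 0, Tendsto (Rn β) atTop (𝓝 R) := by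
  set a := (2 + β) / 2
  set c := (β ^ 2 / 3 + β + 1) / (2 * β)
  -- `a * c - (a / 2) ^ 2 = (2 + β) * (β ^ 2 + 6 * β + 12) / (48 * β)`
  have hdet : 0 < a * c - (a / 2) ^ 2 := by
    simp only [a, c]
    field_simp
    nlinarith [show 0 < (2 + β) * (β ^ 2 + 6 * β + 12) by positivity]
  refine ⟨(a + c) ^ 2 / (a * c - (a / 2) ^ 2), by positivity, ?_⟩
  have h1 := tendsto_L1_design β
  have h3 := tendsto_L3_design hβ.ne'
  refine (((h1.add h3).pow 2).div ((h1.mul h3).sub ((h1.div_const 2).pow 2)) hdet.ne').congr' ?_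
  filter_upwards [eventually_ne_atTop 0] with n hn
  simp only [Rn, L2_design_eq_half β hn, Pi.div_apply]

theorem exists_pos_tendsto_Kn {β : ℝ} (hβ : 0 < β) : ∃ K > 0, Tendsto (Kn β) atTop (𝓝 K) := by
  obtain ⟨R, hR, hlim⟩ := exists_pos_tendsto_Rn hβ
  have hκ : Continuous fun r : ℝ => (√r + √(r - 4)) ^ 2 / 4 := by fun_prop
  exact ⟨_, by positivity, (hκ.tendsto R).comp hlim⟩

/-- Doubling the number of sub-intervals of a fixed design interval has
asymptotically no effect on the condition number: `K(2n)/K(n) → 1`. -/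
theorem K_double_ratio_tendsto_one (β : ℝ) (hβ : 0 < β) :
    Tendsto (fun n : ℕ => Kn β (2 * n) / Kn β n) atTop (nhds 1) := by
  obtain ⟨K, hK, hlim⟩ := exists_pos_tendsto_Kn hβ
  exact tendsto_comp_div_self hlim hK.ne' (tendsto_id.const_mul_atTop' two_pos)
end

section
/- For every β > 0, the ratio D̃(2n)/D(n) converges, as n → ∞, to D(β) := 16(β+1)(β²+3β+3) / ((β+2)(β²+6β+12)), where D(n) is the determinant of the Fisher information matrix for the design ξ_n = {0, 1/n, …, 1} on [0,1] (n+1 points, step 1/n) and D̃(2n) is the determinant for the design ξ̃_{2n} = {0, 1/n, …, 2} on [0,2] (2n+1 points, step 1/n). -/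
open Real Filter

/-- Determinant of the Fisher information matrix for the equidistant design
`ξ_n = {0, 1/n, …, 1}` on `[0,1]` (`n+1` points with step `1/n`). -/
noncomputable def Dn (β : ℝ) (n : ℕ) : ℝ :=
  L1 β (n + 1) (1 / n) * L3 β (n + 1) (1 / n) - L2 β (n + 1) (1 / n) ^ 2

/-- Determinant of the Fisher information matrix for the equidistant design
`ξ̃_{2n} = {0, 1/n, …, 2}` on `[0,2]` (`2n+1` points with step `1/n`). -/
noncomputable def Dtilde (β : ℝ) (n : ℕ) : ℝ :=
  L1 β (2 * n + 1) (1 / n) * L3 β (2 * n + 1) (1 / n) - L2 β (2 * n + 1) (1 / n) ^ 2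

/-!
On the design with `k * n + 1` points and step `1 / n`, i.e. on `[0, k]`, put `e = exp (β / n)`.
Every Fisher information entry is a rational function of `e → 1`, `n * (e - 1) → β` and
`(k * n + 1) * (e - 1) → k * β`, so the determinant tends to `fisherDetLimit β k`.
The theorem is the quotient of the cases `k = 2` and `k = 1`.
-/

open Topology

noncomputable def fisherDet (β : ℝ) (m : ℕ) (d : ℝ) : ℝ :=
  L1 β m d * L3 β m d - L2 β m d ^ 2

noncomputable def fisherDetLimit (β T : ℝ) : ℝ :=
  T * (2 + β * T) * ((β * T) ^ 2 + 6 * β * T + 12) / (48 * β)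

theorem tendsto_natCast_mul_exp_div_sub_one (c : ℝ) :
    Tendsto (fun n : ℕ => (n : ℝ) * (exp (c / n) - 1)) atTop (𝓝 c) := by
  have hderiv : HasDerivAt (fun x => exp (c * x)) c 0 := by
    simpa using ((hasDerivAt_id (0 : ℝ)).const_mul c).exp
  have hstep : Tendsto (fun n : ℕ => ((n : ℝ))⁻¹) atTop (𝓝[>] 0) :=
    tendsto_inv_atTop_nhdsGT_zero.comp tendsto_natCast_atTop_atTop
  refine (hderiv.tendsto_slope_zero_right.comp hstep).congr fun n => ?_
  simp [div_eq_mul_inv]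

theorem tendsto_exp_div_natCast (c : ℝ) :
    Tendsto (fun n : ℕ => exp (c / n)) atTop (𝓝 1) := by
  simpa using (tendsto_const_div_atTop_nhds_zero_nat c).rexp

section GrowingDesign

variable (β : ℝ) (k : ℕ)

theorem tendsto_natCast_mul_add_one_mul_exp_sub_one :
    Tendsto (fun n : ℕ => (k * n + 1 : ℝ) * (exp (β / n) - 1)) atTop (𝓝 (k * β)) := by
  have h := ((tendsto_natCast_mul_exp_div_sub_one β).const_mul (k : ℝ)).add
    ((tendsto_exp_div_natCast β).sub_const 1)
  rw [sub_self, add_zero] at h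
  exact h.congr fun n => by ring

theorem tendsto_L1 :
    Tendsto (fun n : ℕ => L1 β (k * n + 1) (1 / n)) atTop (𝓝 ((2 + k * β) / 2)) := by
  have h := ((tendsto_natCast_mul_add_one_mul_exp_sub_one β k).const_add 2).div
    ((tendsto_exp_div_natCast β).add_const 1) (by norm_num)
  rw [one_add_one_eq_two] at h
  refine h.congr fun n => ?_
  simp only [Pi.div_apply, L1, mul_one_div]
  push_cast
  ring

theorem tendsto_L2 :
    Tendsto (fun n : ℕ => L2 β (k * n + 1) (1 / n)) atTop (𝓝 (k * (2 + k * β) / 4)) := by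
  convert ((tendsto_L1 β k).const_mul ((k : ℝ) / 2)).congr' ?_ using 2
  · ring
  filter_upwards [eventually_ne_atTop 0] with n hn
  simp only [L2]
  push_cast
  field_simp
  ring

theorem tendsto_L3 (hβ : β ≠ 0) :
    Tendsto (fun n : ℕ => L3 β (k * n + 1) (1 / n)) atTop
      (𝓝 (k / (2 * β) * ((k * β) ^ 2 / 3 + k * β + 1))) := by
  set e : ℕ → ℝ := fun n => exp (β / n)
  set x : ℕ → ℝ := fun n => (k * n + 1 : ℝ) * (e n - 1)
  have he : Tendsto e atTop (𝓝 1) := tendsto_exp_div_natCast β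
  have hx : Tendsto x atTop (𝓝 (k * β)) := tendsto_natCast_mul_add_one_mul_exp_sub_one β k
  have hscale : Tendsto (fun n : ℕ => k / (n * (e n - 1) * (e n + 1))) atTop
      (𝓝 (k / (β * (1 + 1)))) :=
    tendsto_const_nhds.div ((tendsto_natCast_mul_exp_div_sub_one β).mul (he.add_const 1))
      (by norm_num [hβ])
  have hsum : Tendsto (fun n => x n * (2 * x n - (e n - 1)) / 6 + x n + 1) atTop
      (𝓝 (k * β * (2 * (k * β) - (1 - 1)) / 6 + k * β + 1)) :=
    (((hx.mul ((hx.const_mul 2).sub (he.sub_const 1))).div_const 6).add hx).add_const 1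
  convert (hscale.mul hsum).congr' ?_ using 2
  · ring
  filter_upwards [eventually_ne_atTop 0] with n hn
  have he1 : e n - 1 ≠ 0 := by
    simp only [e, sub_ne_zero, Ne, Real.exp_eq_one_iff]
    positivity
  -- pairs `d ^ 2 * (m - 1) = k / n` with `e - 1` into `n * (e - 1)`
  have hexp : exp (2 * β * (1 / n)) - 1 = (e n - 1) * (e n + 1) := by
    rw [show 2 * β * (1 / n) = β / n + β / n by ring, Real.exp_add]
    ring
  simp only [L3, hexp]
  simp only [x, e, mul_one_div]
  push_cast
  field_simp
  ring

theorem tendsto_fisherDet (hβ : β ≠ 0) :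
    Tendsto (fun n : ℕ => fisherDet β (k * n + 1) (1 / n)) atTop
      (𝓝 (fisherDetLimit β k)) := by
  convert ((tendsto_L1 β k).mul (tendsto_L3 β k hβ)).sub ((tendsto_L2 β k).pow 2) using 2
  · rfl
  simp only [fisherDetLimit]
  field_simp
  ring

end GrowingDesign

/-- Doubling the design interval: `D̃(2n)/D(n) → D(β) = 16(β+1)(β²+3β+3) /
((β+2)(β²+6β+12))`. -/
theorem D_interval_double_ratio (β : ℝ) (hβ : 0 < β) :
    Tendsto (fun n : ℕ => Dtilde β n / Dn β n) atTop
      (nhds (16 * (β + 1) * (β ^ 2 + 3 * β + 3) / ((β + 2) * (β ^ 2 + 6 * β + 12)))) := by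
  have hD : fisherDetLimit β (1 : ℕ) ≠ 0 := by
    simp only [fisherDetLimit, Nat.cast_one]
    positivity
  have h := (tendsto_fisherDet β 2 hβ.ne').div (tendsto_fisherDet β 1 hβ.ne') hD
  convert h using 2
  · simp [Dn, Dtilde, fisherDet]
  · simp only [fisherDetLimit]
    push_cast
    field_simp
    ring
end

section
/- For all β > 0, γ > 0 and integers n, m ≥ 2, the function D(d,δ) = L1(n,d)·M1(m,δ)·(L1(n,d)·L3(n,d) − L2(n,d)²)·(M1(m,δ)·M3(m,δ) − M2(m,δ)²) is strictly monotone increasing in d > 0 for each fixed δ > 0, and strictly monotone increasing in δ > 0 for each fixed d > 0. -/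
open Real Filter

/-- Determinant of the Fisher information matrix for the Ornstein–Uhlenbeck
sheet model on the directionally equidistant grid with `n` points of step `d`
(parameter `β`) and `m` points of step `δ` (parameter `γ`):
`D(d,δ) = L1·M1·(L1·L3 − L2²)·(M1·M3 − M2²)`, where `Mi = Li` with `γ, m, δ`. -/
noncomputable def Dsheet (β γ : ℝ) (n m : ℕ) (d δ : ℝ) : ℝ :=
  L1 β n d * L1 γ m δ * (L1 β n d * L3 β n d - L2 β n d ^ 2) *
    (L1 γ m δ * L3 γ m δ - L2 γ m δ ^ 2)

/-
With `u = e^{βd} - 1` one has `L1 = (n u + 2)/(u + 2)`, increasing in `d`, and the Schur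
complement `L3 - L2²/L1` equals `(n - 1)/(12 β²) · x² P(u)/(u (u + 2))` at `x = βd`, where
`P(u) = n(n+1)u² + 6(n+1)u + 12`. So `D` is the product of `F(d) = L1² · (L3 - L2²/L1)` and its
analogue in `δ`, both positive, and it suffices that `x ↦ x² P(eˣ - 1)/(e^{2x} - 1)` increases.
Using `x ≤ eˣ - 1` once, the sign of its derivative reduces to that of a cubic in `u` with
positive coefficients.
-/

open Set

/-- The Schur complement `L3 − L2² / L1` of `L1` in the block `[[L1, L2], [L2, L3]]`, written
without division using `L2 = d (n - 1) / 2 · L1`. -/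
noncomputable def schurCompl (β : ℝ) (n : ℕ) (d : ℝ) : ℝ :=
  L3 β n d - (d * (n - 1) / 2) ^ 2 * L1 β n d

def schurPoly (ν u : ℝ) : ℝ := ν * (ν + 1) * u ^ 2 + 6 * (ν + 1) * u + 12

def schurPolyDeriv (ν u : ℝ) : ℝ := 2 * ν * (ν + 1) * u + 6 * (ν + 1)

noncomputable def schurProfile (ν x : ℝ) : ℝ :=
  x ^ 2 * schurPoly ν (exp x - 1) / (exp x ^ 2 - 1)

lemma L1_eq_sub (β : ℝ) (n : ℕ) (d : ℝ) :
    L1 β n d = n - 2 * (n - 1) / (exp (β * d) + 1) := by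
  unfold L1; field_simp; ring

lemma L1_strictMono {β : ℝ} (hβ : 0 < β) {n : ℕ} (hn : 1 < n) : StrictMono (L1 β n) := by
  intro a b hab
  have hn' : (1 : ℝ) < n := by exact_mod_cast hn
  simp only [L1_eq_sub]
  gcongr

lemma L1_pos {β d : ℝ} (n : ℕ) (h : 0 ≤ β * d) : 0 < L1 β n d := by
  have hE : 1 ≤ exp (β * d) := one_le_exp h
  unfold L1
  apply div_pos _ (by positivity)
  nlinarith [(n.cast_nonneg : (0 : ℝ) ≤ n)]

lemma schurPoly_pos {ν u : ℝ} (hν : 0 ≤ ν) (hu : 0 ≤ u) : 0 < schurPoly ν u := by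
  unfold schurPoly; positivity

lemma hasDerivAt_schurPoly (ν u : ℝ) : HasDerivAt (schurPoly ν) (schurPolyDeriv ν u) u := by
  have h := (((hasDerivAt_pow 2 u).const_mul (ν * (ν + 1))).add
    ((hasDerivAt_id u).const_mul (6 * (ν + 1)))).add_const 12
  exact h.congr_deriv (by norm_num [schurPolyDeriv]; ring)

lemma schurProfile_deriv_num_pos {ν x E : ℝ} (hν : 3 / 2 ≤ ν) (hx : 0 < x)
    (hxE : x + 1 ≤ E) :
    0 < 2 * schurPoly ν (E - 1) * (E ^ 2 - 1) + x * E *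
      (schurPolyDeriv ν (E - 1) * (E ^ 2 - 1) - 2 * E * schurPoly ν (E - 1)) := by
  obtain ⟨u, rfl⟩ : ∃ u, E = u + 1 := ⟨E - 1, by ring⟩
  have hxu : 0 ≤ u - x := by linarith
  -- `x ≤ u = eˣ - 1` enters only through the nonnegative second summand
  have key : 2 * schurPoly ν (u + 1 - 1) * ((u + 1) ^ 2 - 1) + x * (u + 1) *
      (schurPolyDeriv ν (u + 1 - 1) * ((u + 1) ^ 2 - 1)
        - 2 * (u + 1) * schurPoly ν (u + 1 - 1)) =
      x * (24 + 24 * ν * u + 6 * (ν + 3) * (ν - 1) * u ^ 2 + 2 * (2 * ν - 3) * (ν + 1) * u ^ 3)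
        + (u - x) * (2 * schurPoly ν u * (u + 2)) := by
    simp only [schurPoly, schurPolyDeriv]; ring
  have h1 : 0 ≤ ν - 1 := by linarith
  have h2 : 0 ≤ 2 * ν - 3 := by linarith
  have hν0 : 0 ≤ ν := by linarith
  have hu0 : 0 ≤ u := by linarith
  have hP := schurPoly_pos hν0 hu0
  have hQ : 0 < 24 + 24 * ν * u + 6 * (ν + 3) * (ν - 1) * u ^ 2
      + 2 * (2 * ν - 3) * (ν + 1) * u ^ 3 := by
    positivity
  rw [key]
  exact add_pos_of_pos_of_nonneg (mul_pos hx hQ) (mul_nonneg hxu (by positivity))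

lemma hasDerivAt_schurProfile (ν : ℝ) {x : ℝ} (hx : x ≠ 0) :
    HasDerivAt (schurProfile ν)
      (x * (2 * schurPoly ν (exp x - 1) * (exp x ^ 2 - 1) + x * exp x *
        (schurPolyDeriv ν (exp x - 1) * (exp x ^ 2 - 1) - 2 * exp x * schurPoly ν (exp x - 1)))
        / (exp x ^ 2 - 1) ^ 2) x := by
  have hg : exp x ^ 2 - 1 ≠ 0 := by
    rw [sub_ne_zero, ← exp_nat_mul, Nat.cast_ofNat, Ne, exp_eq_one_iff]; simpa using hx
  have hP := (hasDerivAt_schurPoly ν (exp x - 1)).comp x ((hasDerivAt_exp x).sub_const 1)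
  have h := ((hasDerivAt_pow 2 x).mul hP).div (((hasDerivAt_exp x).pow 2).sub_const 1) hg
  exact h.congr_deriv (by norm_num; ring)

lemma schurProfile_pos {ν x : ℝ} (hν : 0 ≤ ν) (hx : 0 < x) : 0 < schurProfile ν x := by
  have hE := one_lt_exp_iff.mpr hx
  have hP := schurPoly_pos hν (by linarith : 0 ≤ exp x - 1)
  have hg : 0 < exp x ^ 2 - 1 := by nlinarith
  unfold schurProfile; positivity

lemma schurProfile_strictMonoOn {ν : ℝ} (hν : 3 / 2 ≤ ν) :
    StrictMonoOn (schurProfile ν) (Ioi 0) := by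
  refine strictMonoOn_of_hasDerivWithinAt_pos (convex_Ioi 0)
    (fun x hx => (hasDerivAt_schurProfile ν (ne_of_gt hx)).continuousAt.continuousWithinAt)
    (fun x hx => (hasDerivAt_schurProfile ν ?_).hasDerivWithinAt) (fun x hx => ?_)
  all_goals rw [interior_Ioi] at hx
  · exact ne_of_gt hx
  have hg : 0 < exp x ^ 2 - 1 := by nlinarith [one_lt_exp_iff.mpr hx]
  exact div_pos (mul_pos hx (schurProfile_deriv_num_pos hν hx (add_one_le_exp x))) (by positivity)

lemma schurCompl_eq {β d : ℝ} (n : ℕ) (hβ : β ≠ 0) (hd : d ≠ 0) :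
    schurCompl β n d = (n - 1) / (12 * β ^ 2) * schurProfile n (β * d) := by
  have hg : exp (β * d) ^ 2 - 1 ≠ 0 := by
    rw [sub_ne_zero, ← exp_nat_mul, Nat.cast_ofNat, Ne, exp_eq_one_iff]; simp [hβ, hd]
  have hE : exp (β * d) + 1 ≠ 0 := by positivity
  have h2 : exp (2 * β * d) = exp (β * d) ^ 2 := by rw [← exp_nat_mul]; ring_nf
  unfold schurCompl L3 L1 schurProfile schurPoly
  rw [h2]
  set E := exp (β * d)
  field_simp
  ring

lemma schurCompl_pos {β d : ℝ} {n : ℕ} (hβ : 0 < β) (hn : 2 ≤ n) (hd : 0 < d) :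
    0 < schurCompl β n d := by
  have hn' : (2 : ℝ) ≤ n := by exact_mod_cast hn
  rw [schurCompl_eq n hβ.ne' hd.ne']
  exact mul_pos (div_pos (by linarith) (by positivity))
    (schurProfile_pos (by linarith) (by positivity))

lemma schurCompl_strictMonoOn {β : ℝ} {n : ℕ} (hβ : 0 < β) (hn : 2 ≤ n) :
    StrictMonoOn (schurCompl β n) (Ioi 0) := by
  have hn' : (2 : ℝ) ≤ n := by exact_mod_cast hn
  intro a ha b hb hab
  rw [schurCompl_eq n hβ.ne' (ne_of_gt ha), schurCompl_eq n hβ.ne' (ne_of_gt hb)]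
  refine mul_lt_mul_of_pos_left ?_ (div_pos (by linarith) (by positivity))
  exact schurProfile_strictMonoOn (by linarith) (mul_pos hβ ha) (mul_pos hβ hb)
    (mul_lt_mul_of_pos_left hab hβ)

lemma L1_sq_mul_schurCompl_strictMonoOn {β : ℝ} {n : ℕ} (hβ : 0 < β) (hn : 2 ≤ n) :
    StrictMonoOn (fun d => L1 β n d ^ 2 * schurCompl β n d) (Ioi 0) := by
  intro a ha b hb hab
  have hL1 := L1_pos n (mul_pos hβ ha).le
  exact mul_lt_mul'' (pow_lt_pow_left₀ (L1_strictMono hβ hn hab) hL1.le two_ne_zero)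
    (schurCompl_strictMonoOn hβ hn ha hb hab) (by positivity) (schurCompl_pos hβ hn ha).le

lemma L1_sq_mul_schurCompl_pos {β d : ℝ} {n : ℕ} (hβ : 0 < β) (hn : 2 ≤ n) (hd : 0 < d) :
    0 < L1 β n d ^ 2 * schurCompl β n d :=
  mul_pos (pow_pos (L1_pos n (mul_pos hβ hd).le) 2) (schurCompl_pos hβ hn hd)

lemma Dsheet_eq_mul (β γ : ℝ) (n m : ℕ) (d δ : ℝ) :
    Dsheet β γ n m d δ =
      L1 β n d ^ 2 * schurCompl β n d * (L1 γ m δ ^ 2 * schurCompl γ m δ) := by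
  unfold Dsheet schurCompl L2; ring

/-- `D(d,δ)` is strictly monotone increasing in `d` for each fixed `δ > 0`,
and strictly monotone increasing in `δ` for each fixed `d > 0`. -/
theorem Dsheet_strictMono (β γ : ℝ) (hβ : 0 < β) (hγ : 0 < γ)
    (n m : ℕ) (hn : 2 ≤ n) (hm : 2 ≤ m) :
    (∀ δ > (0 : ℝ), StrictMonoOn (fun d => Dsheet β γ n m d δ) (Set.Ioi 0)) ∧
    (∀ d > (0 : ℝ), StrictMonoOn (fun δ => Dsheet β γ n m d δ) (Set.Ioi 0)) := by
  simp only [Dsheet_eq_mul]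
  constructor
  · intro δ hδ a ha b hb hab
    exact mul_lt_mul_of_pos_right (L1_sq_mul_schurCompl_strictMonoOn hβ hn ha hb hab)
      (L1_sq_mul_schurCompl_pos hγ hm hδ)
  · intro d hd a ha b hb hab
    exact mul_lt_mul_of_pos_left (L1_sq_mul_schurCompl_strictMonoOn hγ hm ha hb hab)
      (L1_sq_mul_schurCompl_pos hβ hn hd)
end
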